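/- For k ∈ ℕ, s ≥ 0 and L > 0, define the relative area 𝒜_k(s, 3L) = [ ∫_s^{s+L} f_k(r) dr + ∫_{s+2L}^{s+3L} f_k(r) dr ] / ∫_s^{s+3L} f_k(r) dr, where f_k(r) = (r^k/k!)e^{-r}. Then for every k ∈ ℕ, every L > 0 and every s ≥ k: 𝒜_k(s, 3L) ≤ 𝒜_0(3L) = (1 + e^{-2L})(1 − e^{-L})/(1 − e^{-3L}). -/
import Mathlib


open Real MeasureTheory

/-- `f_k(r) = (r^k/k!) e^{-r}`. -/
noncomputable def fEigen (k : ℕ) (r : ℝ) : ℝ :=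
  r ^ k / (Nat.factorial k) * Real.exp (-r)

/-- The relative area `𝒜_k(s, 3L)`: the fraction of `∫_s^{s+3L} f_k` that
remains after the open middle third `(s+L, s+2L)` is removed. -/
noncomputable def relArea (k : ℕ) (s L : ℝ) : ℝ :=
  ((∫ r in s..(s + L), fEigen k r) + ∫ r in (s + 2 * L)..(s + 3 * L), fEigen k r) /
    ∫ r in s..(s + 3 * L), fEigen k r

lemma fEigen_continuous (k : ℕ) : Continuous (fEigen k) := by
  unfold fEigen
  fun_prop

lemma fEigen_intInt (k : ℕ) (a b : ℝ) : IntervalIntegrable (fEigen k) volume a b :=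
  (fEigen_continuous k).intervalIntegrable a b

lemma fEigen_pos (k : ℕ) {r : ℝ} (hr : 0 < r) : 0 < fEigen k r := by
  unfold fEigen
  have : (0:ℝ) < (Nat.factorial k : ℝ) := by exact_mod_cast k.factorial_pos
  positivity

lemma aux_le (k : ℕ) {a b r L : ℝ} (hb : 0 < b) (har : 0 ≤ a * r) (h : a * r ≤ (r + L) * b) :
    (a / b) ^ k * Real.exp (-L) * fEigen k r ≤ fEigen k (r + L) := by
  unfold fEigen
  have hfac : (0:ℝ) < (Nat.factorial k : ℝ) := by exact_mod_cast k.factorial_pos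
  have hexp : Real.exp (-(r + L)) = Real.exp (-L) * Real.exp (-r) := by
    rw [← Real.exp_add]; ring_nf
  rw [hexp]
  have hpow : (a / b) ^ k * r ^ k ≤ (r + L) ^ k := by
    rw [div_pow, div_mul_eq_mul_div, div_le_iff₀ (pow_pos hb k), ← mul_pow, ← mul_pow]
    exact pow_le_pow_left₀ har h k
  have h2 := mul_le_mul_of_nonneg_right hpow
    (le_of_lt (by positivity : (0:ℝ) < Real.exp (-L) * Real.exp (-r) / (Nat.factorial k : ℝ)))
  calc (a / b) ^ k * Real.exp (-L) * (r ^ k / (Nat.factorial k) * Real.exp (-r))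
      = (a / b) ^ k * r ^ k * (Real.exp (-L) * Real.exp (-r) / (Nat.factorial k)) := by ring
    _ ≤ (r + L) ^ k * (Real.exp (-L) * Real.exp (-r) / (Nat.factorial k)) := h2
    _ = (r + L) ^ k / (Nat.factorial k) * (Real.exp (-L) * Real.exp (-r)) := by ring

lemma aux_ge (k : ℕ) {a b r L : ℝ} (hb : 0 < b) (hrL : 0 ≤ (r + L) * b) (h : (r + L) * b ≤ a * r) :
    fEigen k (r + L) ≤ (a / b) ^ k * Real.exp (-L) * fEigen k r := by
  unfold fEigen
  have hfac : (0:ℝ) < (Nat.factorial k : ℝ) := by exact_mod_cast k.factorial_pos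
  have hexp : Real.exp (-(r + L)) = Real.exp (-L) * Real.exp (-r) := by
    rw [← Real.exp_add]; ring_nf
  rw [hexp]
  have hpow : (r + L) ^ k ≤ (a / b) ^ k * r ^ k := by
    rw [div_pow, div_mul_eq_mul_div, le_div_iff₀ (pow_pos hb k), ← mul_pow, ← mul_pow]
    exact pow_le_pow_left₀ hrL h k
  have h2 := mul_le_mul_of_nonneg_right hpow
    (le_of_lt (by positivity : (0:ℝ) < Real.exp (-L) * Real.exp (-r) / (Nat.factorial k : ℝ)))
  calc (r + L) ^ k / (Nat.factorial k) * (Real.exp (-L) * Real.exp (-r))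
      = (r + L) ^ k * (Real.exp (-L) * Real.exp (-r) / (Nat.factorial k)) := by ring
    _ ≤ (a / b) ^ k * r ^ k * (Real.exp (-L) * Real.exp (-r) / (Nat.factorial k)) := h2
    _ = (a / b) ^ k * Real.exp (-L) * (r ^ k / (Nat.factorial k) * Real.exp (-r)) := by ring

set_option maxHeartbeats 1000000 in
/-- For every `k`, `L > 0` and `s ≥ k`:
`𝒜_k(s, 3L) ≤ 𝒜₀(3L) = (1 + e^{-2L})(1 − e^{-L})/(1 − e^{-3L})`. -/
theorem relArea_le_relArea_zero (k : ℕ) (L s : ℝ) (hL : 0 < L) (hs : (k : ℝ) ≤ s) :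
    relArea k s L ≤
      (1 + Real.exp (-(2 * L))) * (1 - Real.exp (-L)) / (1 - Real.exp (-(3 * L))) := by
  have hs0 : 0 ≤ s := le_trans (Nat.cast_nonneg k) hs
  have hsL : 0 < s + L := by linarith
  set e : ℝ := Real.exp (-L) with he_def
  set ρ : ℝ := ((s + 2 * L) / (s + L)) ^ k * e with hρ_def
  have he_pos : 0 < e := Real.exp_pos _
  have he_lt1 : e < 1 := Real.exp_lt_one_iff.mpr (by linarith)
  -- ρ bounds
  have hratio1 : (1:ℝ) ≤ (s + 2 * L) / (s + L) := by
    rw [le_div_iff₀ hsL]; linarith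
  have hρ_ge : e ≤ ρ := by
    have h1 : (1:ℝ) ≤ ((s + 2 * L) / (s + L)) ^ k := by
      calc (1:ℝ) = 1 ^ k := (one_pow k).symm
        _ ≤ _ := pow_le_pow_left₀ zero_le_one hratio1 k
    nlinarith
  have hρ_pos : 0 < ρ := lt_of_lt_of_le he_pos hρ_ge
  have hρ_le1 : ρ ≤ 1 := by
    have h1 : (s + 2 * L) / (s + L) ≤ Real.exp (L / (s + L)) := by
      have h2 := Real.add_one_le_exp (L / (s + L))
      have h3 : (s + 2 * L) / (s + L) = L / (s + L) + 1 := by field_simp; ring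
      linarith
    have h2 : ((s + 2 * L) / (s + L)) ^ k ≤ Real.exp (L / (s + L)) ^ k :=
      pow_le_pow_left₀ (by positivity) h1 k
    have h3 : Real.exp (L / (s + L)) ^ k = Real.exp ((k : ℝ) * (L / (s + L))) := by
      rw [← Real.exp_nat_mul]
    have h4 : (k : ℝ) * (L / (s + L)) ≤ L := by
      rw [mul_div_assoc'] at *
      rw [div_le_iff₀ hsL]
      nlinarith
    have h5 : ((s + 2 * L) / (s + L)) ^ k ≤ Real.exp L := by
      calc ((s + 2 * L) / (s + L)) ^ k ≤ Real.exp ((k : ℝ) * (L / (s + L))) := h3 ▸ h2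
        _ ≤ Real.exp L := Real.exp_le_exp.mpr h4
    calc ρ ≤ Real.exp L * e := by
          exact mul_le_mul_of_nonneg_right h5 he_pos.le
      _ = 1 := by rw [he_def, ← Real.exp_add]; simp
  -- the three pieces
  set A : ℝ := ∫ r in s..(s + L), fEigen k r with hA_def
  set B : ℝ := ∫ r in (s + L)..(s + 2 * L), fEigen k r with hB_def
  set C : ℝ := ∫ r in (s + 2 * L)..(s + 3 * L), fEigen k r with hC_def
  have hA_pos : 0 < A := by
    apply intervalIntegral.intervalIntegral_pos_of_pos_on (fEigen_intInt k s (s + L))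
    · intro x hx
      exact fEigen_pos k (lt_of_le_of_lt hs0 hx.1)
    · linarith
  have hB_pos : 0 < B := by
    apply intervalIntegral.intervalIntegral_pos_of_pos_on (fEigen_intInt k _ _)
    · intro x hx
      exact fEigen_pos k (by linarith [hx.1])
    · linarith
  have hC_pos : 0 < C := by
    apply intervalIntegral.intervalIntegral_pos_of_pos_on (fEigen_intInt k _ _)
    · intro x hx
      exact fEigen_pos k (by linarith [hx.1])
    · linarith
  -- B as shifted integral
  have hshiftB : B = ∫ r in s..(s + L), fEigen k (r + L) := by
    rw [intervalIntegral.integral_comp_add_right (fun r => fEigen k r) L, hB_def]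
    ring_nf
  have hshiftC : C = ∫ r in (s + L)..(s + 2 * L), fEigen k (r + L) := by
    rw [intervalIntegral.integral_comp_add_right (fun r => fEigen k r) L, hC_def]
    ring_nf
  -- ρ A ≤ B
  have hBA : ρ * A ≤ B := by
    rw [hshiftB, hA_def, ← intervalIntegral.integral_const_mul]
    apply intervalIntegral.integral_mono_on (by linarith)
    · exact (Continuous.intervalIntegrable (continuous_const.mul (fEigen_continuous k)) _ _)
    · exact (Continuous.intervalIntegrable ((fEigen_continuous k).comp (continuous_id.add continuous_const)) _ _)
    · intro x hx
      rw [hρ_def, he_def]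
      exact aux_le k hsL (by nlinarith [hx.1]) (by nlinarith [hx.2])
  -- C ≤ ρ B
  have hCB : C ≤ ρ * B := by
    rw [hshiftC, hB_def, ← intervalIntegral.integral_const_mul]
    apply intervalIntegral.integral_mono_on (by linarith)
    · exact (Continuous.intervalIntegrable ((fEigen_continuous k).comp (continuous_id.add continuous_const)) _ _)
    · exact (Continuous.intervalIntegrable (continuous_const.mul (fEigen_continuous k)) _ _)
    · intro x hx
      rw [hρ_def, he_def]
      exact aux_ge k hsL (by nlinarith [hx.1]) (by nlinarith [hx.1])
  -- total
  have hTotal : (∫ r in s..(s + 3 * L), fEigen k r) = A + B + C := by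
    rw [hA_def, hB_def, hC_def,
      intervalIntegral.integral_add_adjacent_intervals (fEigen_intInt k s (s + L))
        (fEigen_intInt k (s + L) (s + 2 * L)),
      intervalIntegral.integral_add_adjacent_intervals (fEigen_intInt k s (s + 2 * L))
        (fEigen_intInt k (s + 2 * L) (s + 3 * L))]
  have hT_pos : 0 < A + B + C := by linarith
  -- rewrite RHS
  have hexp2 : Real.exp (-(2 * L)) = e * e := by
    rw [he_def, ← Real.exp_add]; ring_nf
  have hexp3 : Real.exp (-(3 * L)) = e * e * e := by
    rw [he_def, ← Real.exp_add, ← Real.exp_add]; ring_nf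
  have hRHS : (1 + Real.exp (-(2 * L))) * (1 - Real.exp (-L)) / (1 - Real.exp (-(3 * L)))
      = (1 + e ^ 2) / (1 + e + e ^ 2) := by
    rw [hexp2, hexp3, ← he_def]
    have hd1 : 0 < 1 - e * e * e := by nlinarith
    have hd2 : (0:ℝ) < 1 + e + e ^ 2 := by positivity
    rw [div_eq_div_iff hd1.ne' hd2.ne']
    ring
  rw [hRHS]
  unfold relArea
  rw [hTotal, ← hA_def, ← hC_def]
  have hd2 : (0:ℝ) < 1 + e + e ^ 2 := by positivity
  rw [div_le_div_iff₀ hT_pos hd2]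
  clear_value A B C ρ e
  clear hρ_def he_def hA_def hB_def hC_def hshiftB hshiftC hTotal hexp2 hexp3 hRHS
  -- key inequality: e*A + e*C ≤ B + e^2*B
  have key : e * A + e * C ≤ B + e ^ 2 * B := by
    have h1 : ρ * (e * A) ≤ e * B := by
      nlinarith [mul_le_mul_of_nonneg_left hBA he_pos.le]
    have h2 : ρ * (e * C) ≤ e * ρ ^ 2 * B := by
      nlinarith [mul_le_mul_of_nonneg_left hCB (mul_nonneg he_pos.le hρ_pos.le)]
    have h3 : e * B + e * ρ ^ 2 * B ≤ ρ * (B + e ^ 2 * B) := by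
      nlinarith [mul_nonneg (mul_nonneg hB_pos.le (sub_nonneg.mpr hρ_ge))
        (sub_nonneg.mpr (mul_le_one₀ he_lt1.le hρ_pos.le hρ_le1))]
    have h4 : ρ * (e * A + e * C) ≤ ρ * (B + e ^ 2 * B) := by nlinarith
    exact le_of_mul_le_mul_left h4 hρ_pos
  nlinarith [key]
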